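/- Let K_{n,n} = G(U,V), n ≥ 3, be edge-colored with exactly k colors such that there is no rainbow K_{1,3}, and suppose some vertex u ∈ U is incident with only one color, say color 1. If additionally every vertex u' ∈ U sees at most one color different from 1, then U can be partitioned into parts U_1,…,U_k and V into parts V_1,…,V_k such that only colors 1 and i appear on edges between U_i and V_i, and every edge not inside some pair (U_i,V_i) has color 1. -/

import Mathlib

open Function Finset SimpleGraph

/-- A rainbow path on 4 vertices `u₁ v₁ u₂ v₂` (middle pattern). -/
def rbP4pat {N : ℕ} {γ : Type*} (c : Fin N → Fin N → γ) : Prop :=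
  ∃ u₁ u₂ v₁ v₂ : Fin N, u₁ ≠ u₂ ∧ v₁ ≠ v₂ ∧
    c u₁ v₁ ≠ c u₂ v₁ ∧ c u₁ v₁ ≠ c u₂ v₂ ∧ c u₂ v₁ ≠ c u₂ v₂

/-- The coloring `c` of `K_{N,N}` contains a rainbow path on 4 vertices. -/
def hasRainbowP4 {N : ℕ} {γ : Type*} (c : Fin N → Fin N → γ) : Prop :=
  rbP4pat c ∨ rbP4pat (fun v u => c u v)

/-- A rainbow path on 5 vertices `u₁ v₁ u₂ v₂ u₃` (one-sided pattern). -/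
def rbP5pat {N : ℕ} {γ : Type*} (c : Fin N → Fin N → γ) : Prop :=
  ∃ u₁ u₂ u₃ v₁ v₂ : Fin N, u₁ ≠ u₂ ∧ u₁ ≠ u₃ ∧ u₂ ≠ u₃ ∧ v₁ ≠ v₂ ∧
    c u₁ v₁ ≠ c u₂ v₁ ∧ c u₁ v₁ ≠ c u₂ v₂ ∧ c u₁ v₁ ≠ c u₃ v₂ ∧
    c u₂ v₁ ≠ c u₂ v₂ ∧ c u₂ v₁ ≠ c u₃ v₂ ∧ c u₂ v₂ ≠ c u₃ v₂

/-- The coloring `c` of `K_{N,N}` contains a rainbow path on 5 vertices. -/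
def hasRainbowP5 {N : ℕ} {γ : Type*} (c : Fin N → Fin N → γ) : Prop :=
  rbP5pat c ∨ rbP5pat (fun v u => c u v)

/-- The coloring `c` of `K_{N,N}` contains a rainbow star `K_{1,3}`:
some vertex (on either side) has three incident edges with pairwise distinct colors. -/
def hasRainbowK13 {N : ℕ} {γ : Type*} (c : Fin N → Fin N → γ) : Prop :=
  (∃ u v₁ v₂ v₃ : Fin N, c u v₁ ≠ c u v₂ ∧ c u v₁ ≠ c u v₃ ∧ c u v₂ ≠ c u v₃) ∨
  (∃ v u₁ u₂ u₃ : Fin N, c u₁ v ≠ c u₂ v ∧ c u₁ v ≠ c u₃ v ∧ c u₂ v ≠ c u₃ v)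

/-- The coloring `c` of `K_{N,N}` (first coordinate: side `U`, second: side `V`)
contains a monochromatic copy of the (bipartite) graph `H`. -/
def hasMonoCopy {N : ℕ} {γ : Type*} {α : Type*} (c : Fin N → Fin N → γ)
    (H : SimpleGraph α) : Prop :=
  ∃ i : γ, ∃ f : α → Fin N ⊕ Fin N, Function.Injective f ∧
    ∀ a b, H.Adj a b → ∃ u v : Fin N, c u v = i ∧
      ((f a = Sum.inl u ∧ f b = Sum.inr v) ∨ (f a = Sum.inr v ∧ f b = Sum.inl u))

/-- The coloring `c` of `K_{N,N}` contains a monochromatic copy of `K_{s,t}`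
(in either orientation with respect to the two sides). -/
def hasMonoKst {N : ℕ} {γ : Type*} (c : Fin N → Fin N → γ) (s t : ℕ) : Prop :=
  ∃ i : γ, ∃ S T : Finset (Fin N),
    ((S.card = s ∧ T.card = t) ∨ (S.card = t ∧ T.card = s)) ∧
    ∀ u ∈ S, ∀ v ∈ T, c u v = i

/-- Disjoint union of a family of graphs, on the sigma type. -/
def sigmaUnion {ι : Type*} {β : ι → Type*} (G : ∀ i, SimpleGraph (β i)) :
    SimpleGraph (Σ i, β i) where
  Adj x y := ∃ i a b, (G i).Adj a b ∧ x = ⟨i, a⟩ ∧ y = ⟨i, b⟩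
  symm := by constructor; rintro x y ⟨i, a, b, h, rfl, rfl⟩; exact ⟨i, b, a, h.symm, rfl, rfl⟩
  loopless := by
    constructor
    rintro x ⟨i, a, b, h, rfl, h2⟩
    obtain rfl : a = b := by simpa using h2
    exact h.ne rfl

/-!
Since `u` sees only color 1, a vertex `y ∈ V` seeing two colors other than 1 would be the
centre of a rainbow `K_{1,3}` with one edge to `u`; so every vertex of `V`, like every vertex
of `U` by hypothesis, sees at most one color other than 1. Put each vertex into the part of
that color (into part 1 if it sees only color 1): an edge of color `i ≠ 1` then joins `U_i`
to `V_i`.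
-/

section OffColor

variable {β γ : Type*}

noncomputable def offColor (a : γ) (f : β → γ) : γ :=
  open Classical in if h : ∃ b, f b ≠ a then f h.choose else a

theorem offColor_eq_of_ne {a : γ} {f : β → γ} (hf : (Set.range f \ {a}).Subsingleton)
    {b : β} (hb : f b ≠ a) : offColor a f = f b := by
  have h : ∃ b, f b ≠ a := ⟨b, hb⟩
  rw [offColor, dif_pos h]
  exact hf ⟨⟨_, rfl⟩, h.choose_spec⟩ ⟨⟨b, rfl⟩, hb⟩

theorem offColor_mem {a : γ} {f : β → γ} {s : Set γ} (ha : a ∈ s) (hf : ∀ b, f b ∈ s) :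
    offColor a f ∈ s := by
  unfold offColor
  split_ifs
  exacts [hf _, ha]

end OffColor

theorem subsingleton_range_col_of_not_hasRainbowK13 {N : ℕ} {γ : Type*}
    {c : Fin N → Fin N → γ} (h : ¬ hasRainbowK13 c) {u : Fin N} {a : γ}
    (hu : ∀ v, c u v = a) (y : Fin N) :
    (Set.range (fun x => c x y) \ {a}).Subsingleton := by
  rintro _ ⟨⟨x₁, rfl⟩, h₁⟩ _ ⟨⟨x₂, rfl⟩, h₂⟩
  by_contra hne
  exact h (Or.inr ⟨y, u, x₁, x₂, by rw [hu]; exact Ne.symm h₁, by rw [hu]; exact Ne.symm h₂, hne⟩)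

theorem stmt3_general (n k : ℕ) (c : Fin n → Fin n → ℕ)
    (hcolors : (Finset.univ ×ˢ Finset.univ).image (fun p : Fin n × Fin n => c p.1 p.2)
      = Finset.Icc 1 k)
    (h : ¬ hasRainbowK13 c)
    (u : Fin n) (hu : Finset.univ.image (fun v => c u v) = ({1} : Finset ℕ))
    (hrest : ∀ u' : Fin n, ((Finset.univ.image (fun v => c u' v)) \ ({1} : Finset ℕ)).card ≤ 1) :
    ∃ pU pV : Fin n → ℕ,
      (∀ x, pU x ∈ Finset.Icc 1 k) ∧ (∀ y, pV y ∈ Finset.Icc 1 k) ∧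
      (∀ x y : Fin n,
        (pU x = pV y → (c x y = 1 ∨ c x y = pU x)) ∧
        (pU x ≠ pV y → c x y = 1)) := by
  have hu1 (v : Fin n) : c u v = 1 := by
    simpa [hu] using mem_image_of_mem (fun v => c u v) (mem_univ v)
  have hrow (x : Fin n) : (Set.range (c x) \ {1}).Subsingleton := by
    have := card_le_one_iff_subsingleton.1 (hrest x)
    rwa [coe_sdiff, coe_image, coe_univ, Set.image_univ, coe_singleton] at this
  have hcol := subsingleton_range_col_of_not_hasRainbowK13 h hu1
  have hmem (x y : Fin n) : c x y ∈ (Icc 1 k : Set ℕ) := by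
    rw [← hcolors]; simp
  have h1 : 1 ∈ (Icc 1 k : Set ℕ) := hu1 u ▸ hmem u u
  refine ⟨fun x => offColor 1 (c x), fun y => offColor 1 (fun x => c x y),
    fun x => offColor_mem h1 (hmem x), fun y => offColor_mem h1 (hmem · y),
    fun x y => ⟨fun _ => or_iff_not_imp_left.2 fun hxy => (offColor_eq_of_ne (hrow x) hxy).symm,
      fun hne => ?_⟩⟩
  by_contra hxy
  exact hne ((offColor_eq_of_ne (hrow x) hxy).trans (offColor_eq_of_ne (hcol y) hxy).symm)

/-- exactly `k` colors (labeled `1,…,k`), no rainbow `K_{1,3}`, some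
vertex `u ∈ U` sees only color 1, and every vertex of `U` sees at most one color
different from 1.  Then there are partitions `U_1,…,U_k` of `U` and `V_1,…,V_k` of `V`
(given by part-index functions `pU, pV`) such that only colors `1` and `i` appear on
edges between `U_i` and `V_i`, and every other edge has color 1. -/
theorem stmt3 (n k : ℕ) (hn : 3 ≤ n) (c : Fin n → Fin n → ℕ)
    (hcolors : (Finset.univ ×ˢ Finset.univ).image (fun p : Fin n × Fin n => c p.1 p.2)
      = Finset.Icc 1 k)
    (h : ¬ hasRainbowK13 c)
    (u : Fin n) (hu : Finset.univ.image (fun v => c u v) = ({1} : Finset ℕ))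
    (hrest : ∀ u' : Fin n, ((Finset.univ.image (fun v => c u' v)) \ ({1} : Finset ℕ)).card ≤ 1) :
    ∃ pU pV : Fin n → ℕ,
      (∀ x, pU x ∈ Finset.Icc 1 k) ∧ (∀ y, pV y ∈ Finset.Icc 1 k) ∧
      (∀ x y : Fin n,
        (pU x = pV y → (c x y = 1 ∨ c x y = pU x)) ∧
        (pU x ≠ pV y → c x y = 1)) :=
  stmt3_general n k c hcolors h u hu hrest
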